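/- arXiv:math/0701467 — 8 statements merged into one kernel-verified Lean document; each statement's English description precedes it below -/
import Mathlib

section
/- Let R be a commutative integral domain and H an R-algebra that is free as an R-module. Let λ and ν be distinct R-algebra homomorphisms H → R, and suppose Λ ∈ H is a nonzero left λ-integral (i.e. h·Λ = λ(h)·Λ for all h ∈ H) and Λ' ∈ H is a nonzero left ν-integral. Then ν(Λ) = 0 and Λ·Λ' = 0. -/
/-- If `λ ≠ ν` are weights of a free algebra `H` over an integral domain `R`,
with nonzero left integrals `Λ`, `Λ'`, then `ν Λ = 0` and `Λ * Λ' = 0`. -/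
theorem weight_integral_orthogonality
    {R H : Type*} [CommRing R] [IsDomain R] [Ring H] [Algebra R H] [Module.Free R H]
    (lam nu : H →ₐ[R] R) (hne : lam ≠ nu)
    (Λ Λ' : H) (hΛ : Λ ≠ 0) (hΛ' : Λ' ≠ 0)
    (hint : ∀ h : H, h * Λ = lam h • Λ)
    (hint' : ∀ h : H, h * Λ' = nu h • Λ') :
    nu Λ = 0 ∧ Λ * Λ' = 0 := by
  obtain ⟨h, hh⟩ : ∃ h, lam h ≠ nu h := by
    by_contra hc
    push_neg at hc
    exact hne (AlgHom.ext hc)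
  have key : Λ * Λ' = nu Λ • Λ' := hint' Λ
  have e1 : h * (Λ * Λ') = (lam h * nu Λ) • Λ' := by
    rw [← mul_assoc, hint h, smul_mul_assoc, key, smul_smul]
  have e2 : h * (Λ * Λ') = (nu h * nu Λ) • Λ' := by
    rw [key, mul_smul_comm, hint' h, smul_smul, mul_comm (nu Λ)]
  have e3 : ((lam h - nu h) * nu Λ) • Λ' = 0 := by
    rw [sub_mul, sub_smul, ← e1, ← e2, sub_self]
  have : (lam h - nu h) * nu Λ = 0 :=
    (smul_eq_zero.mp e3).resolve_right hΛ'
  have hnu : nu Λ = 0 :=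
    (mul_eq_zero.mp this).resolve_left (sub_ne_zero.mpr hh)
  exact ⟨hnu, by rw [key, hnu, zero_smul]⟩
end

section
/- Let H be a Hopf algebra over a commutative ring R and h ∈ H with Δ(h) = g ⊗ h + h ⊗ g' for grouplikes g, g'. For any algebra maps γ, and any n ≥ 1 with γ(g) ≠ γ(g'), the n-fold convolution power satisfies γ^{*n}(h) = γ(h)·(γ(g)^n - γ(g')^n)/(γ(g) - γ(g')), i.e. (γ(g) - γ(g'))·γ^{*n}(h) = γ(h)·(γ(g)^n - γ(g')^n). -/
open TensorProduct

/-- Convolution of two `R`-linear functionals on a bialgebra. -/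
noncomputable def conv {R H : Type*} [CommSemiring R] [Semiring H] [Bialgebra R H]
    (f g : H →ₗ[R] R) : H →ₗ[R] R :=
  LinearMap.mul' R R ∘ₗ TensorProduct.map f g ∘ₗ Coalgebra.comul

/-- `n`-th convolution power of a functional (`0`-th power is the counit). -/
noncomputable def convPow {R H : Type*} [CommSemiring R] [Semiring H] [Bialgebra R H]
    (f : H →ₗ[R] R) : ℕ → (H →ₗ[R] R)
  | 0 => Coalgebra.counit
  | n + 1 => conv f (convPow f n)

lemma convPow_grouplike {R H : Type*} [CommSemiring R] [Semiring H] [Bialgebra R H]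
    (f : H →ₗ[R] R) (g : H) (hg : Coalgebra.comul (R := R) g = g ⊗ₜ[R] g)
    (hgε : Coalgebra.counit (R := R) g = 1) (n : ℕ) :
    convPow f n g = f g ^ n := by
  induction n with
  | zero => simpa [convPow]
  | succ n ih => simp [convPow, conv, hg, ih, pow_succ, mul_comm]

/-- For skew-primitive `h` with `Δ h = g ⊗ h + h ⊗ g'` and an algebra map `γ`
with `γ g ≠ γ g'`, for `n ≥ 1`:
`(γ g - γ g') * γ^{*n}(h) = γ h * ((γ g)^n - (γ g')^n)`. -/
theorem convPow_skewPrimitive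
    {R H : Type*} [CommRing R] [Ring H] [HopfAlgebra R H]
    (g g' h : H)
    (hg : Coalgebra.comul (R := R) g = g ⊗ₜ[R] g) (hgε : Coalgebra.counit (R := R) g = 1)
    (hg' : Coalgebra.comul (R := R) g' = g' ⊗ₜ[R] g') (hg'ε : Coalgebra.counit (R := R) g' = 1)
    (hh : Coalgebra.comul (R := R) h = g ⊗ₜ[R] h + h ⊗ₜ[R] g')
    (γ : H →ₐ[R] R) (n : ℕ) (hn : 1 ≤ n) (hne : γ g ≠ γ g') :
    (γ g - γ g') * convPow γ.toLinearMap n h = γ h * ((γ g) ^ n - (γ g') ^ n) := by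
  -- counit of h is 0
  have hcu : Coalgebra.counit (R := R) h • g' = 0 := by
    have := Coalgebra.rTensor_counit_comul (R := R) h
    rw [hh] at this
    simp only [map_add, LinearMap.rTensor_tmul, hgε] at this
    have h2 : (1 : R) ⊗ₜ[R] h + Coalgebra.counit (R := R) h ⊗ₜ[R] g' = 1 ⊗ₜ[R] h := this
    have := congrArg (TensorProduct.lid R H) h2
    simpa using this
  have hεh : Coalgebra.counit (R := R) h = 0 := by
    have h3 := congrArg γ hcu
    rw [map_smul, map_zero, smul_eq_mul] at h3
    -- γ g' is a unit
    have h4 := HopfAlgebra.mul_antipode_rTensor_comul_apply (R := R) (A := H) g'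
    rw [hg'] at h4
    simp only [LinearMap.rTensor_tmul, LinearMap.mul'_apply, hg'ε, map_one] at h4
    have h5 := congrArg γ h4
    rw [map_mul, map_one] at h5
    have : Coalgebra.counit (R := R) h * (γ (HopfAlgebra.antipode (R := R) g') * γ g') = 0 := by
      rw [mul_comm (γ _), ← mul_assoc, h3, zero_mul]
    rwa [h5, mul_one] at this
  -- recurrence for convPow on h
  have hrec : ∀ m : ℕ, convPow γ.toLinearMap (m + 1) h
      = γ g * convPow γ.toLinearMap m h + γ h * (γ g') ^ m := by
    intro m
    show conv γ.toLinearMap (convPow γ.toLinearMap m) h = _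
    rw [conv]
    simp only [LinearMap.coe_comp, Function.comp_apply, hh, map_add, TensorProduct.map_tmul,
      LinearMap.mul'_apply, convPow_grouplike γ.toLinearMap g' hg' hg'ε m]
    rfl
  induction n with
  | zero => omega
  | succ n ih =>
    rcases Nat.eq_zero_or_pos n with h0 | hpos
    · subst h0
      rw [hrec 0]
      show (γ g - γ g') * (γ g * Coalgebra.counit h + γ h * (γ g') ^ 0) = _
      rw [hεh]
      ring
    · have := ih hpos
      rw [hrec n, mul_add, mul_left_comm, this]
      ring
end

section
/- Let H be a Hopf algebra over a commutative integral domain R, Π a finite group of weights, Σ_Π their sum, and h ∈ H skew-primitive with Δ(h) = g ⊗ h + h ⊗ g'. Then for every λ ∈ Π: (λ(g) - λ(g'))·Σ_Π(h) = λ(h)·(Σ_Π(g) - Σ_Π(g')). -/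
/-!
The weights form a finite subset `Φ` of the convolution monoid `WithConv (H →ₗ[R] R)` that is
closed under convolution and in which every element has a right inverse. Each `λ ∈ Φ` is therefore
a unit, so left and right convolution by `λ` are injective maps `Φ → Φ`, hence permutations of the
finite set `Φ`, and `Σ_Φ` is invariant under both. Evaluating `Σ_Φ (λ * γ)` and `Σ_Φ (γ * λ)` at the
skew-primitive `h` gives `λ g · Σ_Φ h + λ h · Σ_Φ g' = Σ_Φ h = Σ_Φ g · λ h + Σ_Φ h · λ g'`.
-/

open TensorProduct

section Monoid

variable {M β : Type*} [Monoid M]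

theorem isUnit_of_forall_exists_mul_eq_one {S : Set M} (hS : ∀ x ∈ S, ∃ y ∈ S, x * y = 1)
    {a : M} (ha : a ∈ S) : IsUnit a := by
  obtain ⟨b, hb, hab⟩ := hS a ha
  obtain ⟨c, -, hbc⟩ := hS b hb
  obtain rfl : a = c := left_inv_eq_right_inv hab hbc
  exact isUnit_iff_exists.2 ⟨b, hab, hbc⟩

variable [AddCommMonoid β] {S : Finset M} {a : M}

theorem Finset.sum_comp_mul_left_of_isUnit (ha : IsUnit a) (hS : ∀ x ∈ S, a * x ∈ S)
    (f : M → β) : ∑ x ∈ S, f (a * x) = ∑ x ∈ S, f x :=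
  have hinj := ha.mul_right_injective.injOn
  Finset.sum_nbij (a * ·) hS hinj (Finset.surjOn_of_injOn_of_card_le _ hS hinj le_rfl)
    fun _ _ => rfl

theorem Finset.sum_comp_mul_right_of_isUnit (ha : IsUnit a) (hS : ∀ x ∈ S, x * a ∈ S)
    (f : M → β) : ∑ x ∈ S, f (x * a) = ∑ x ∈ S, f x :=
  have hinj := ha.mul_left_injective.injOn
  Finset.sum_nbij (· * a) hS hinj (Finset.surjOn_of_injOn_of_card_le _ hS hinj le_rfl)
    fun _ _ => rfl

end Monoid

open WithConv

theorem LinearMap.convMul_apply_of_comul_eq_add {R A C : Type*} [CommSemiring R] [Semiring A]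
    [Algebra R A] [AddCommMonoid C] [Module R C] [CoalgebraStruct R C]
    {x a b c d : C} (hx : Coalgebra.comul (R := R) x = a ⊗ₜ b + c ⊗ₜ d)
    (f k : WithConv (C →ₗ[R] A)) : (f * k) x = f a * k b + f c * k d := by
  simp [hx]

section Bialgebra

variable {R H : Type*} [CommSemiring R] [Semiring H] [Bialgebra R H]

theorem toConv_conv (f g : H →ₗ[R] R) : toConv (conv f g) = toConv f * toConv g := rfl

theorem toConv_counitAlgHom : toConv (Bialgebra.counitAlgHom R H).toLinearMap = 1 := by
  ext; simp

end Bialgebra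

theorem sum_apply_skewPrimitive_symmetric {R A C : Type*} [CommSemiring R] [CommRing A]
    [Algebra R A] [AddCommMonoid C] [Module R C] [Coalgebra R C]
    {T : Finset (WithConv (C →ₗ[R] A))} (hT_mul : ∀ a ∈ T, ∀ b ∈ T, a * b ∈ T)
    (hT_inv : ∀ a ∈ T, ∃ b ∈ T, a * b = 1) {g g' h : C}
    (hh : Coalgebra.comul (R := R) h = g ⊗ₜ h + h ⊗ₜ g') {l : WithConv (C →ₗ[R] A)} (hl : l ∈ T) :
    (l g - l g') * (∑ f ∈ T, f h) = l h * ((∑ f ∈ T, f g) - (∑ f ∈ T, f g')) := by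
  have hunit := isUnit_of_forall_exists_mul_eq_one hT_inv hl
  have hleft := Finset.sum_comp_mul_left_of_isUnit hunit (hT_mul _ hl) (fun f => f h)
  have hright := Finset.sum_comp_mul_right_of_isUnit hunit (hT_mul · · _ hl) (fun f => f h)
  simp only [LinearMap.convMul_apply_of_comul_eq_add hh, Finset.sum_add_distrib, ← Finset.mul_sum,
    ← Finset.sum_mul] at hleft hright
  linear_combination hleft - hright

theorem sumPi_skewPrimitive_symmetric_general
    {R H : Type*} [CommRing R] [Ring H] [HopfAlgebra R H]
    (Φ : Finset (H →ₐ[R] R))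
    (hmul : ∀ γ ∈ Φ, ∀ ν ∈ Φ, ∃ μ ∈ Φ,
      conv γ.toLinearMap ν.toLinearMap = μ.toLinearMap)
    (hinv : ∀ γ ∈ Φ, ∃ ν ∈ Φ,
      conv γ.toLinearMap ν.toLinearMap = (Bialgebra.counitAlgHom R H).toLinearMap)
    (g g' h : H)
    (hh : Coalgebra.comul (R := R) h = g ⊗ₜ[R] h + h ⊗ₜ[R] g')
    (lam : H →ₐ[R] R) (hlam : lam ∈ Φ) :
    (lam g - lam g') * (∑ γ ∈ Φ, γ h) = lam h * ((∑ γ ∈ Φ, γ g) - (∑ γ ∈ Φ, γ g')) := by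
  classical
  set T := Φ.image fun γ => toConv γ.toLinearMap
  have hsum (x : H) : ∑ γ ∈ Φ, γ x = ∑ f ∈ T, f x :=
    (Finset.sum_image (f := fun f => f x) fun _ _ _ _ hγν =>
      AlgHom.toLinearMap_injective (toConv_injective hγν)).symm
  have hT_mul : ∀ a ∈ T, ∀ b ∈ T, a * b ∈ T := by
    simp only [T, Finset.forall_mem_image]
    intro γ hγ ν hν
    obtain ⟨μ, hμ, hconv⟩ := hmul γ hγ ν hν
    exact Finset.mem_image.2 ⟨μ, hμ, by rw [← toConv_conv, hconv]⟩
  have hT_inv : ∀ a ∈ T, ∃ b ∈ T, a * b = 1 := by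
    simp only [T, Finset.forall_mem_image, Finset.exists_mem_image]
    intro γ hγ
    obtain ⟨ν, hν, hconv⟩ := hinv γ hγ
    exact ⟨ν, hν, by rw [← toConv_conv, hconv, toConv_counitAlgHom]⟩
  simp only [hsum]
  exact sum_apply_skewPrimitive_symmetric hT_mul hT_inv hh (Finset.mem_image_of_mem _ hlam)

/-- For a finite group `Φ` of weights, skew-primitive `h` with
`Δ h = g ⊗ h + h ⊗ g'`, and any `lam ∈ Φ`:
`(lam g - lam g') * Σ_Φ(h) = lam h * (Σ_Φ(g) - Σ_Φ(g'))`. -/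
theorem sumPi_skewPrimitive_symmetric
    {R H : Type*} [CommRing R] [IsDomain R] [Ring H] [HopfAlgebra R H]
    (Φ : Finset (H →ₐ[R] R))
    (hone : Bialgebra.counitAlgHom R H ∈ Φ)
    (hmul : ∀ γ ∈ Φ, ∀ ν ∈ Φ, ∃ μ ∈ Φ,
      conv γ.toLinearMap ν.toLinearMap = μ.toLinearMap)
    (hinv : ∀ γ ∈ Φ, ∃ ν ∈ Φ,
      conv γ.toLinearMap ν.toLinearMap = (Bialgebra.counitAlgHom R H).toLinearMap)
    (g g' h : H)
    (hg : Coalgebra.comul (R := R) g = g ⊗ₜ[R] g) (hgε : Coalgebra.counit (R := R) g = 1)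
    (hg' : Coalgebra.comul (R := R) g' = g' ⊗ₜ[R] g') (hg'ε : Coalgebra.counit (R := R) g' = 1)
    (hh : Coalgebra.comul (R := R) h = g ⊗ₜ[R] h + h ⊗ₜ[R] g')
    (lam : H →ₐ[R] R) (hlam : lam ∈ Φ) :
    (lam g - lam g') * (∑ γ ∈ Φ, γ h) = lam h * ((∑ γ ∈ Φ, γ g) - (∑ γ ∈ Φ, γ g')) :=
  sumPi_skewPrimitive_symmetric_general Φ hmul hinv g g' h hh lam hlam
end

section
/- Let H be a Hopf algebra over a commutative integral domain R, Π a finite group of weights, and h skew-primitive with Δ(h) = g ⊗ h + h ⊗ g'. If there exists λ ∈ Π with λ(g) ≠ 1 and λ(g') ≠ 1, then Σ_Π(h) = 0. -/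
open TensorProduct

section ConvLemmas

variable {R H : Type*} [CommSemiring R] [Semiring H] [Bialgebra R H]

lemma conv_apply (f g : H →ₗ[R] R) (x : H) :
    conv f g x = LinearMap.mul' R R (TensorProduct.map f g (Coalgebra.comul x)) := rfl

lemma conv_assoc (f g k : H →ₗ[R] R) : conv (conv f g) k = conv f (conv g k) := by
  ext a
  have h1 : conv (conv f g) k a =
      ((LinearMap.mul' R R ∘ₗ TensorProduct.map (LinearMap.mul' R R ∘ₗ TensorProduct.map f g) k)
        ∘ₗ LinearMap.rTensor H (Coalgebra.comul (R := R))) (Coalgebra.comul a) := by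
    have : (LinearMap.mul' R R ∘ₗ TensorProduct.map (conv f g) k : H ⊗[R] H →ₗ[R] R) =
        (LinearMap.mul' R R ∘ₗ TensorProduct.map (LinearMap.mul' R R ∘ₗ TensorProduct.map f g) k)
          ∘ₗ LinearMap.rTensor H (Coalgebra.comul (R := R)) := by
      apply TensorProduct.ext'
      intro x y
      simp [conv_apply]
    exact congrFun (congrArg DFunLike.coe this) (Coalgebra.comul a)
  have h2 : conv f (conv g k) a =
      ((LinearMap.mul' R R ∘ₗ TensorProduct.map f (LinearMap.mul' R R ∘ₗ TensorProduct.map g k))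
        ∘ₗ LinearMap.lTensor H (Coalgebra.comul (R := R))) (Coalgebra.comul a) := by
    have : (LinearMap.mul' R R ∘ₗ TensorProduct.map f (conv g k) : H ⊗[R] H →ₗ[R] R) =
        (LinearMap.mul' R R ∘ₗ TensorProduct.map f (LinearMap.mul' R R ∘ₗ TensorProduct.map g k))
          ∘ₗ LinearMap.lTensor H (Coalgebra.comul (R := R)) := by
      apply TensorProduct.ext'
      intro x y
      simp [conv_apply]
    exact congrFun (congrArg DFunLike.coe this) (Coalgebra.comul a)
  rw [h1, h2]
  simp only [LinearMap.comp_apply]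
  rw [← Coalgebra.coassoc_apply a]
  have key : (LinearMap.mul' R R ∘ₗ
        TensorProduct.map f (LinearMap.mul' R R ∘ₗ TensorProduct.map g k)) ∘ₗ
        (TensorProduct.assoc R H H H).toLinearMap =
      LinearMap.mul' R R ∘ₗ
        TensorProduct.map (LinearMap.mul' R R ∘ₗ TensorProduct.map f g) k := by
    apply TensorProduct.ext_threefold
    intro x y z
    simp [mul_assoc]
  calc (LinearMap.mul' R R ∘ₗ TensorProduct.map (LinearMap.mul' R R ∘ₗ TensorProduct.map f g) k)
        ((LinearMap.rTensor H Coalgebra.comul) (Coalgebra.comul a))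
      = ((LinearMap.mul' R R ∘ₗ
          TensorProduct.map f (LinearMap.mul' R R ∘ₗ TensorProduct.map g k)) ∘ₗ
          (TensorProduct.assoc R H H H).toLinearMap)
          ((LinearMap.rTensor H Coalgebra.comul) (Coalgebra.comul a)) := by rw [key]
    _ = _ := rfl

lemma conv_counit_left (f : H →ₗ[R] R) : conv (Coalgebra.counit (R := R) (A := H)) f = f := by
  ext a
  have : (LinearMap.mul' R R ∘ₗ TensorProduct.map (Coalgebra.counit (R := R) (A := H)) f :
      H ⊗[R] H →ₗ[R] R) =
      (LinearMap.mul' R R ∘ₗ TensorProduct.map LinearMap.id f ∘ₗ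
        (TensorProduct.lid R H).symm.toLinearMap ∘ₗ (TensorProduct.lid R H).toLinearMap) ∘ₗ
        LinearMap.rTensor H (Coalgebra.counit (R := R) (A := H)) := by
    apply TensorProduct.ext'
    intro x y
    simp
  have h2 := congrFun (congrArg DFunLike.coe this) (Coalgebra.comul a)
  simp only [LinearMap.comp_apply] at h2
  rw [conv_apply, h2]
  simp

lemma conv_counit_right (f : H →ₗ[R] R) : conv f (Coalgebra.counit (R := R) (A := H)) = f := by
  ext a
  have : (LinearMap.mul' R R ∘ₗ TensorProduct.map f (Coalgebra.counit (R := R) (A := H)) :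
      H ⊗[R] H →ₗ[R] R) =
      (LinearMap.mul' R R ∘ₗ TensorProduct.map f LinearMap.id ∘ₗ
        (TensorProduct.rid R H).symm.toLinearMap ∘ₗ (TensorProduct.rid R H).toLinearMap) ∘ₗ
        LinearMap.lTensor H (Coalgebra.counit (R := R) (A := H)) := by
    apply TensorProduct.ext'
    intro x y
    simp
  have h2 := congrFun (congrArg DFunLike.coe this) (Coalgebra.comul a)
  simp only [LinearMap.comp_apply] at h2
  rw [conv_apply, h2]
  simp

end ConvLemmas

/-- For a finite group `Φ` of weights and skew-primitive `h` with
`Δ h = g ⊗ h + h ⊗ g'`: if some `lam ∈ Φ` has `lam g ≠ 1` and `lam g'` ≠ 1, then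
`(lam g - lam g') * Σ_Φ(h) = lam h * (Σ_Φ(g) - Σ_Φ(g'))`. -/
theorem sumPi_skewPrimitive_vanishes
    {R H : Type*} [CommRing R] [IsDomain R] [Ring H] [HopfAlgebra R H]
    (Φ : Finset (H →ₐ[R] R))
    (hone : Bialgebra.counitAlgHom R H ∈ Φ)
    (hmul : ∀ γ ∈ Φ, ∀ ν ∈ Φ, ∃ μ ∈ Φ,
      conv γ.toLinearMap ν.toLinearMap = μ.toLinearMap)
    (hinv : ∀ γ ∈ Φ, ∃ ν ∈ Φ,
      conv γ.toLinearMap ν.toLinearMap = (Bialgebra.counitAlgHom R H).toLinearMap)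
    (g g' h : H)
    (hg : Coalgebra.comul (R := R) g = g ⊗ₜ[R] g) (hgε : Coalgebra.counit (R := R) g = 1)
    (hg' : Coalgebra.comul (R := R) g' = g' ⊗ₜ[R] g') (hg'ε : Coalgebra.counit (R := R) g' = 1)
    (hh : Coalgebra.comul (R := R) h = g ⊗ₜ[R] h + h ⊗ₜ[R] g')
    (lam : H →ₐ[R] R) (hlam : lam ∈ Φ) (h1 : lam g ≠ 1) (h2 : lam g' ≠ 1) :
    (∑ γ ∈ Φ, γ h) = 0 := by
  classical
  have hε : (Bialgebra.counitAlgHom R H).toLinearMap = Coalgebra.counit (R := R) (A := H) := by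
    ext x; simp
  -- a two-sided inverse for lam
  obtain ⟨ν, hν, hlamν⟩ := hinv lam hlam
  obtain ⟨τ, hτ, hντ⟩ := hinv ν hν
  have hνlam : conv ν.toLinearMap lam.toLinearMap = (Bialgebra.counitAlgHom R H).toLinearMap := by
    have : conv ν.toLinearMap lam.toLinearMap =
        conv (conv ν.toLinearMap lam.toLinearMap) (conv ν.toLinearMap τ.toLinearMap) := by
      rw [hντ, hε, conv_counit_right]
    rw [this, ← conv_assoc, conv_assoc ν.toLinearMap, hlamν, hε, conv_counit_right, hντ, hε]
  -- translation invariance of the sum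
  have key : ∀ x : H, (∑ γ ∈ Φ, conv lam.toLinearMap γ.toLinearMap x) = ∑ γ ∈ Φ, γ x := by
    intro x
    refine Finset.sum_bij' (fun γ hγ => (hmul lam hlam γ hγ).choose)
      (fun μ hμ => (hmul ν hν μ hμ).choose)
      (fun γ hγ => (hmul lam hlam γ hγ).choose_spec.1)
      (fun μ hμ => (hmul ν hν μ hμ).choose_spec.1) ?_ ?_ ?_
    · intro γ hγ
      apply AlgHom.toLinearMap_injective
      rw [← (hmul ν hν _ ((hmul lam hlam γ hγ).choose_spec.1)).choose_spec.2,
        ← (hmul lam hlam γ hγ).choose_spec.2, ← conv_assoc, hνlam, hε, conv_counit_left]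
    · intro μ hμ
      apply AlgHom.toLinearMap_injective
      rw [← (hmul lam hlam _ ((hmul ν hν μ hμ).choose_spec.1)).choose_spec.2,
        ← (hmul ν hν μ hμ).choose_spec.2, ← conv_assoc, hlamν, hε, conv_counit_left]
    · intro γ hγ
      exact DFunLike.congr_fun (hmul lam hlam γ hγ).choose_spec.2 x
  -- evaluate the key identity
  have evg' : ∀ γ : H →ₐ[R] R, conv lam.toLinearMap γ.toLinearMap g' = lam g' * γ g' := by
    intro γ
    rw [conv_apply, hg']
    simp
  have evh : ∀ γ : H →ₐ[R] R,
      conv lam.toLinearMap γ.toLinearMap h = lam g * γ h + lam h * γ g' := by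
    intro γ
    rw [conv_apply, hh]
    simp
  have Sg' : (∑ γ ∈ Φ, γ g') = 0 := by
    have := key g'
    simp only [evg', ← Finset.mul_sum] at this
    have h0 : (lam g' - 1) * (∑ γ ∈ Φ, γ g') = 0 := by linear_combination this
    rcases mul_eq_zero.mp h0 with hc | hc
    · exact absurd (sub_eq_zero.mp hc) h2
    · exact hc
  have := key h
  simp only [evh, Finset.sum_add_distrib, ← Finset.mul_sum, Sg', mul_zero, add_zero] at this
  have h0 : (lam g - 1) * (∑ γ ∈ Φ, γ h) = 0 := by linear_combination this
  rcases mul_eq_zero.mp h0 with hc | hc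
  · exact absurd (sub_eq_zero.mp hc) h1
  · exact hc
end

section
/- Let H be a Hopf algebra over a commutative integral domain R, Π a finite group of weights, and h skew-primitive with Δ(h) = g ⊗ h + h ⊗ g'. If γ(g) = 1 for all γ ∈ Π (g' arbitrary grouplike) and there exists λ ∈ Π with λ(g') ≠ 1, then (1 - λ(g g'))·Σ_Π(h) = |Π|·λ(h), i.e. Σ_Π(h) = |Π|·λ(h)/(1 - λ(gg')). -/
/-!
A weight `λ` of a Hopf algebra has the convolution right inverse `λ ∘ S`, so right convolution
by `λ` permutes the finite set `Π`. Hence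
`Σ_Π(h) = Σ_γ (γ ⋆ λ)(h) = Σ_γ (γ(g) λ(h) + γ(h) λ(g')) = |Π| λ(h) + λ(g') Σ_Π(h)`,
and `λ(g g') = λ(g')` because `λ(g) = 1`.
-/

open TensorProduct

open Coalgebra WithConv

section

variable {R H A : Type*} [CommSemiring R] [Semiring H]

lemma conv_toLinearMap [Bialgebra R H] (γ ν : H →ₐ[R] R) :
    conv γ.toLinearMap ν.toLinearMap = (toConv γ * toConv ν).ofConv.toLinearMap := rfl

lemma AlgHom.convMul_apply_of_comul_eq [Bialgebra R H] [CommSemiring A] [Algebra R A]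
    (f k : WithConv (H →ₐ[R] A)) {g g' h : H}
    (hh : comul (R := R) h = g ⊗ₜ[R] h + h ⊗ₜ[R] g') :
    (f * k) h = f g * k h + f h * k g' := by
  change (toConv f.ofConv.toLinearMap * toConv k.ofConv.toLinearMap) h = _
  simp [hh]

variable [HopfAlgebra R H]

lemma AlgHom.toConv_mul_toConv_comp_antipode [Semiring A] [Algebra R A] (f : H →ₐ[R] A) :
    toConv f.toLinearMap * toConv (f.toLinearMap ∘ₗ HopfAlgebra.antipode R) = 1 := by
  have hdistrib := LinearMap.algHom_comp_convMul_distrib f (toConv LinearMap.id)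
    (toConv (HopfAlgebra.antipode R))
  rw [LinearMap.id_mul_antipode] at hdistrib
  simp only [LinearMap.comp_id] at hdistrib
  apply ofConv_injective
  rw [← hdistrib]
  ext x
  simp

lemma AlgHom.isRightRegular_toConv [CommSemiring A] [Algebra R A] (f : H →ₐ[R] A) :
    IsRightRegular (toConv f) := by
  intro γ ν hγν
  have hlin := congrArg (fun φ : WithConv (H →ₐ[R] A) => toConv φ.ofConv.toLinearMap) hγν
  simp only [AlgHom.toLinearMap_convMul] at hlin
  exact ofConv_injective <| AlgHom.toLinearMap_injective <| toConv_injective <|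
    isRightRegular_of_mul_eq_one f.toConv_mul_toConv_comp_antipode hlin

end

theorem sumPi_skewPrimitive_one_grouplike_in_GPi_general
    {R H : Type*} [CommRing R] [Ring H] [HopfAlgebra R H]
    (Φ : Finset (H →ₐ[R] R))
    (hmul : ∀ γ ∈ Φ, ∀ ν ∈ Φ, ∃ μ ∈ Φ,
      conv γ.toLinearMap ν.toLinearMap = μ.toLinearMap)
    (g g' h : H)
    (hh : Coalgebra.comul (R := R) h = g ⊗ₜ[R] h + h ⊗ₜ[R] g')
    (hGPi : ∀ γ ∈ Φ, γ g = 1)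
    (lam : H →ₐ[R] R) (hlam : lam ∈ Φ) :
    (1 - lam (g * g')) * (∑ γ ∈ Φ, γ h) = (Φ.card : R) * lam h := by
  set ρ : (H →ₐ[R] R) → H →ₐ[R] R := fun γ => (toConv γ * toConv lam).ofConv
  have hmaps : Set.MapsTo ρ Φ Φ := fun γ hγ => by
    obtain ⟨μ, hμ, hconv⟩ := hmul γ hγ lam hlam
    rwa [show ρ γ = μ from
      AlgHom.toLinearMap_injective ((conv_toLinearMap γ lam).symm.trans hconv)]
  have hinj : Set.InjOn ρ Φ := fun γ _ ν _ hρ =>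
    toConv_injective (lam.isRightRegular_toConv (ofConv_injective hρ))
  have hsum : ∑ γ ∈ Φ, γ h = ∑ γ ∈ Φ, ρ γ h :=
    (Finset.sum_nbij ρ hmaps hinj (Finset.surjOn_of_injOn_of_card_le ρ hmaps hinj le_rfl)
      fun _ _ => rfl).symm
  have hterm : ∀ γ ∈ Φ, ρ γ h = lam h + lam g' * γ h := fun γ hγ => by
    rw [AlgHom.convMul_apply_of_comul_eq _ _ hh, hGPi γ hγ]
    ring
  rw [Finset.sum_congr rfl hterm, Finset.sum_add_distrib, ← Finset.mul_sum, Finset.sum_const,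
    nsmul_eq_mul] at hsum
  rw [map_mul, hGPi lam hlam, one_mul]
  linear_combination hsum

/-- For a finite group `Φ` of weights and skew-primitive `h` with
`Δ h = g ⊗ h + h ⊗ g'`, if `γ g = 1` for all `γ ∈ Φ` and some `lam ∈ Φ` has `lam g' ≠ 1`,
then `(1 - lam (g * g')) * Σ_Φ(h) = |Φ| * lam h`. -/
theorem sumPi_skewPrimitive_one_grouplike_in_GPi
    {R H : Type*} [CommRing R] [IsDomain R] [Ring H] [HopfAlgebra R H]
    (Φ : Finset (H →ₐ[R] R))
    (hone : Bialgebra.counitAlgHom R H ∈ Φ)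
    (hmul : ∀ γ ∈ Φ, ∀ ν ∈ Φ, ∃ μ ∈ Φ,
      conv γ.toLinearMap ν.toLinearMap = μ.toLinearMap)
    (hinv : ∀ γ ∈ Φ, ∃ ν ∈ Φ,
      conv γ.toLinearMap ν.toLinearMap = (Bialgebra.counitAlgHom R H).toLinearMap)
    (g g' h : H)
    (hg : Coalgebra.comul (R := R) g = g ⊗ₜ[R] g) (hgε : Coalgebra.counit (R := R) g = 1)
    (hg' : Coalgebra.comul (R := R) g' = g' ⊗ₜ[R] g') (hg'ε : Coalgebra.counit (R := R) g' = 1)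
    (hh : Coalgebra.comul (R := R) h = g ⊗ₜ[R] h + h ⊗ₜ[R] g')
    (hGPi : ∀ γ ∈ Φ, γ g = 1)
    (lam : H →ₐ[R] R) (hlam : lam ∈ Φ) (h2 : lam g' ≠ 1) :
    (1 - lam (g * g')) * (∑ γ ∈ Φ, γ h) = (Φ.card : R) * lam h :=
  sumPi_skewPrimitive_one_grouplike_in_GPi_general Φ hmul g g' h hh hGPi lam hlam
end

section
/- Let H be a Hopf algebra over an integral domain R with fraction field k(R), and h ∈ H with Δ(h) = g ⊗ h + h ⊗ g' for grouplikes g, g'. Define N_h to be the set of algebra maps γ : H → R with γ(g) ≠ γ(g'), and for γ ∈ N_h set f_h(γ) = γ(h)/(γ(g) - γ(g')) ∈ k(R). Then for μ, λ ∈ N_h, (μ*λ)(h) = (λ*μ)(h) if and only if f_h(μ) = f_h(λ). -/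
open TensorProduct

/-- For skew-primitive `h` with `Δ h = g ⊗ h + h ⊗ g'`, and weights
`μ, lam` with `μ g ≠ μ g'` and `lam g ≠ lam g'`, the convolutions `(μ*lam)(h)` and
`(lam*μ)(h)` agree iff `f_h(μ) = f_h(lam)` in the fraction field, where
`f_h(γ) = γ(h)/(γ(g) - γ(g'))`. -/
theorem conv_comm_iff_level_surface
    {R H : Type*} [CommRing R] [IsDomain R] [Ring H] [HopfAlgebra R H]
    (g g' h : H)
    (hg : Coalgebra.comul (R := R) g = g ⊗ₜ[R] g) (hgε : Coalgebra.counit (R := R) g = 1)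
    (hg' : Coalgebra.comul (R := R) g' = g' ⊗ₜ[R] g') (hg'ε : Coalgebra.counit (R := R) g' = 1)
    (hh : Coalgebra.comul (R := R) h = g ⊗ₜ[R] h + h ⊗ₜ[R] g')
    (μ lam : H →ₐ[R] R) (hμ : μ g ≠ μ g') (hlam : lam g ≠ lam g') :
    conv μ.toLinearMap lam.toLinearMap h = conv lam.toLinearMap μ.toLinearMap h ↔
      (algebraMap R (FractionRing R) (μ h)) /
          (algebraMap R (FractionRing R) (μ g) - algebraMap R (FractionRing R) (μ g')) =
        (algebraMap R (FractionRing R) (lam h)) /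
          (algebraMap R (FractionRing R) (lam g) - algebraMap R (FractionRing R) (lam g')) := by
  set K := FractionRing R
  have hinj : Function.Injective (algebraMap R K) := IsFractionRing.injective R K
  have hμK : algebraMap R K (μ g) - algebraMap R K (μ g') ≠ 0 := by
    rw [sub_ne_zero]; exact fun e => hμ (hinj e)
  have hlamK : algebraMap R K (lam g) - algebraMap R K (lam g') ≠ 0 := by
    rw [sub_ne_zero]; exact fun e => hlam (hinj e)
  have hc : ∀ (f₁ f₂ : H →ₐ[R] R),
      conv f₁.toLinearMap f₂.toLinearMap h = f₁ g * f₂ h + f₁ h * f₂ g' := by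
    intro f₁ f₂
    simp [conv, hh]
  rw [hc, hc, div_eq_div_iff hμK hlamK, ← map_sub (algebraMap R K) (μ g), ← map_sub (algebraMap R K) (lam g), ← map_mul, ← map_mul,
    hinj.eq_iff]
  constructor <;> intro e <;> linear_combination -e
end

section
/- Let p be a prime, n a positive integer with p^s ≤ n < p^{s+1}, and l₁, …, l_k positive integers summing to n with l_k ≥ l_i for all i. If l_k < p^s then p divides the multinomial coefficient n!/(l₁!⋯l_k!). If l_k ≥ p^s, then p divides n!/(l₁!⋯l_k!) if and only if p divides (n-p^s)!/(l₁!⋯l_{k-1}!·(l_k - p^s)!). -/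
open Finset Nat

private lemma aux_sum_div_le {k : ℕ} (l : Fin (k + 1) → ℕ) {d : ℕ} (hd : 0 < d) :
    ∑ i, l i / d ≤ (∑ i, l i) / d := by
  rw [Nat.le_div_iff_mul_le hd, Finset.sum_mul]
  exact Finset.sum_le_sum fun i _ => Nat.div_mul_le_self _ _

private lemma aux_legendre (p : ℕ) (hp : p.Prime) {s m : ℕ} (hm : m < p ^ (s + 1)) :
    (m !).factorization p = ∑ j ∈ Finset.Ico 1 (s + 1), m / p ^ j := by
  haveI : Fact p.Prime := ⟨hp⟩
  rw [Nat.factorization_def _ hp]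
  refine padicValNat_factorial ?_
  rcases Nat.eq_zero_or_pos m with hm0 | hm0
  · simp [hm0]
  · exact Nat.log_lt_of_lt_pow hm0.ne' hm

private lemma aux_F_eq (p : ℕ) (hp : p.Prime) {k s : ℕ} (l : Fin (k + 1) → ℕ)
    (hn : ∑ i, l i < p ^ (s + 1)) :
    (Nat.multinomial Finset.univ l).factorization p
      + ∑ i, ∑ j ∈ Finset.Ico 1 (s + 1), l i / p ^ j
      = ∑ j ∈ Finset.Ico 1 (s + 1), (∑ i, l i) / p ^ j := by
  have hprodne : (∏ i, (l i)!) ≠ 0 := (Finset.prod_pos fun i _ => Nat.factorial_pos _).ne'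
  have h1 : ((∏ i, (l i)!).factorization + (Nat.multinomial Finset.univ l).factorization) p
      = ((∑ i, l i)!).factorization p := by
    rw [← Nat.factorization_mul hprodne (Nat.multinomial_pos _ _).ne',
      Nat.multinomial_spec Finset.univ l]
  rw [Finsupp.add_apply] at h1
  have h2 : (∏ i, (l i)!).factorization p = ∑ i, ∑ j ∈ Finset.Ico 1 (s + 1), l i / p ^ j := by
    rw [Nat.factorization_prod fun i _ => (Nat.factorial_pos _).ne', Finset.sum_apply']
    refine Finset.sum_congr rfl fun i _ => aux_legendre p hp ?_
    exact lt_of_le_of_lt (Finset.single_le_sum (fun i _ => Nat.zero_le _) (mem_univ i)) hn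
  rw [h2] at h1
  rw [← aux_legendre p hp hn]
  omega

private lemma aux_div_sub (p : ℕ) (hp : 0 < p) {j s m : ℕ} (hj : j ≤ s) (hm : p ^ s ≤ m) :
    m / p ^ j = (m - p ^ s) / p ^ j + p ^ (s - j) := by
  have h : p ^ j * p ^ (s - j) = p ^ s := by rw [← pow_add]; congr 1; omega
  calc m / p ^ j = ((m - p ^ s) + p ^ j * p ^ (s - j)) / p ^ j := by rw [h]; congr 1; omega
    _ = (m - p ^ s) / p ^ j + p ^ (s - j) := Nat.add_mul_div_left _ _ (pow_pos hp j)

/-- Let `p` be prime, `p^s ≤ n < p^(s+1)`, and `l₀,…,l_k` positive integers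
summing to `n` with `l_k` maximal. If `l_k < p^s` then `p` divides the multinomial
coefficient `n!/(∏ lᵢ!)`; if `l_k ≥ p^s` then `p` divides `n!/(∏ lᵢ!)` iff `p` divides
`(n - p^s)!/(l₀!⋯l_{k-1}!(l_k - p^s)!)`. -/
theorem multinomial_prime_divisibility
    (p : ℕ) (hp : p.Prime) (s n k : ℕ) (hn1 : p ^ s ≤ n) (hn2 : n < p ^ (s + 1))
    (l : Fin (k + 1) → ℕ) (hpos : ∀ i, 0 < l i) (hsum : ∑ i, l i = n)
    (hmax : ∀ i, l i ≤ l (Fin.last k)) :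
    (l (Fin.last k) < p ^ s → p ∣ Nat.multinomial Finset.univ l) ∧
    (p ^ s ≤ l (Fin.last k) →
      (p ∣ Nat.multinomial Finset.univ l ↔
        p ∣ Nat.multinomial Finset.univ (Function.update l (Fin.last k)
          (l (Fin.last k) - p ^ s)))) := by
  have hppos : 0 < p := hp.pos
  have hnlt : ∑ i, l i < p ^ (s + 1) := hsum ▸ hn2
  have hF := aux_F_eq p hp l hnlt
  rw [hsum] at hF
  have hlastle : l (Fin.last k) ≤ n := by
    rw [← hsum]
    exact Finset.single_le_sum (fun i _ => Nat.zero_le _) (mem_univ _)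
  constructor
  · intro hls
    have hs1 : 1 ≤ s := by
      rcases Nat.eq_zero_or_pos s with h | h
      · subst h; rw [pow_zero] at hls; have := hpos (Fin.last k); omega
      · exact h
    have hlt : ∑ i, ∑ j ∈ Finset.Ico 1 (s + 1), l i / p ^ j
        < ∑ j ∈ Finset.Ico 1 (s + 1), n / p ^ j := by
      rw [Finset.sum_comm]
      refine Finset.sum_lt_sum (fun j _ => ?_)
        ⟨s, Finset.mem_Ico.mpr ⟨hs1, Nat.lt_succ_self s⟩, ?_⟩
      · calc ∑ i, l i / p ^ j ≤ (∑ i, l i) / p ^ j := aux_sum_div_le l (pow_pos hppos j)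
          _ = n / p ^ j := by rw [hsum]
      · have hz : ∀ i, l i / p ^ s = 0 :=
          fun i => Nat.div_eq_of_lt (lt_of_le_of_lt (hmax i) hls)
        calc ∑ i : Fin (k + 1), l i / p ^ s = 0 := by simp [hz]
          _ < n / p ^ s := Nat.div_pos hn1 (pow_pos hppos s)
    refine Nat.dvd_of_factorization_pos ?_
    omega
  · intro hge
    set l' := Function.update l (Fin.last k) (l (Fin.last k) - p ^ s) with hl'
    have hsum' : ∑ i, l' i = n - p ^ s := by
      rw [hl', Finset.sum_update_of_mem (Finset.mem_univ _)]
      have h2 : ∑ i ∈ univ \ {Fin.last k}, l i = n - l (Fin.last k) := by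
        have := Finset.sum_sdiff (Finset.singleton_subset_iff.mpr (mem_univ (Fin.last k)))
            (f := l)
        rw [hsum] at this
        simp only [Finset.sum_singleton] at this
        omega
      rw [h2]
      omega
    have hF' := aux_F_eq p hp (s := s) l' (by rw [hsum']; omega)
    rw [hsum'] at hF'
    have hE1 : ∑ j ∈ Finset.Ico 1 (s + 1), n / p ^ j
        = ∑ j ∈ Finset.Ico 1 (s + 1), (n - p ^ s) / p ^ j
          + ∑ j ∈ Finset.Ico 1 (s + 1), p ^ (s - j) := by
      rw [← Finset.sum_add_distrib]
      exact Finset.sum_congr rfl fun j hj =>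
        aux_div_sub p hppos (by have := Finset.mem_Ico.mp hj; omega) hn1
    have hE2 : ∑ i, ∑ j ∈ Finset.Ico 1 (s + 1), l i / p ^ j
        = ∑ i, ∑ j ∈ Finset.Ico 1 (s + 1), l' i / p ^ j
          + ∑ j ∈ Finset.Ico 1 (s + 1), p ^ (s - j) := by
      rw [Fin.sum_univ_castSucc, Fin.sum_univ_castSucc
        (f := fun i => ∑ j ∈ Finset.Ico 1 (s + 1), l' i / p ^ j)]
      have hcast : ∀ i : Fin k, l' i.castSucc = l i.castSucc := fun i =>
        Function.update_of_ne (Fin.castSucc_lt_last i).ne _ _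
      have hlast : l' (Fin.last k) = l (Fin.last k) - p ^ s :=
        Function.update_self _ _ _
      simp only [hcast, hlast]
      have h3 : ∑ j ∈ Finset.Ico 1 (s + 1), l (Fin.last k) / p ^ j
          = ∑ j ∈ Finset.Ico 1 (s + 1), (l (Fin.last k) - p ^ s) / p ^ j
            + ∑ j ∈ Finset.Ico 1 (s + 1), p ^ (s - j) := by
        rw [← Finset.sum_add_distrib]
        exact Finset.sum_congr rfl fun j hj =>
          aux_div_sub p hppos (by have := Finset.mem_Ico.mp hj; omega) hge
      omega
    have hFeq : (Nat.multinomial Finset.univ l).factorization p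
        = (Nat.multinomial Finset.univ l').factorization p := by omega
    rw [hp.dvd_iff_one_le_factorization (Nat.multinomial_pos _ _).ne',
      hp.dvd_iff_one_le_factorization (Nat.multinomial_pos _ _).ne', hFeq]
end

section
/- Let n be a positive integer with binary expansion having exactly r ones (i.e. r is the number of nonzero binary digits of n). If k > r, then for every tuple of positive integers l₁, …, l_k with l₁ + ⋯ + l_k = n, the multinomial coefficient n!/(l₁!⋯l_k!) is even. -/
lemma list_count_one_eq_sum (l : List ℕ) (h : ∀ x ∈ l, x < 2) :
    l.count 1 = l.sum := by
  induction l with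
  | nil => simp
  | cons a t ih =>
    have ha : a < 2 := h a (by simp)
    have ht := ih (fun x hx => h x (by simp [hx]))
    interval_cases a <;> simp [List.count_cons, ht] <;> omega

lemma sum_digits_pos {m : ℕ} (hm : 0 < m) : 0 < (Nat.digits 2 m).sum := by
  have hne : m ≠ 0 := hm.ne'
  have hlast := Nat.getLast_digit_ne_zero 2 hne
  have hmem : (Nat.digits 2 m).getLast (Nat.digits_ne_nil_iff_ne_zero.mpr hne) ∈
      Nat.digits 2 m := List.getLast_mem _
  have := List.single_le_sum (fun x (_ : x ∈ Nat.digits 2 m) => Nat.zero_le x) _ hmem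
  omega

lemma val_factorial (m : ℕ) :
    padicValNat 2 (Nat.factorial m) = m - (Nat.digits 2 m).sum := by
  have := @sub_one_mul_padicValNat_factorial 2 ⟨Nat.prime_two⟩ m
  simpa using this

/-- If `n ≥ 1` has exactly `r` ones in its binary expansion and `k > r`, then
for every tuple of positive integers `l₁,…,l_k` summing to `n`, the multinomial coefficient
`n!/(∏ lᵢ!)` is even. -/
theorem multinomial_even_of_many_parts
    (n : ℕ) (hn : 1 ≤ n) (r : ℕ) (hr : r = (Nat.digits 2 n).count 1)
    (k : ℕ) (hk : r < k) (l : Fin k → ℕ) (hpos : ∀ i, 0 < l i) (hsum : ∑ i, l i = n) :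
    2 ∣ Nat.multinomial Finset.univ l := by
  haveI : Fact (Nat.Prime 2) := ⟨Nat.prime_two⟩
  set s : ℕ → ℕ := fun m => (Nat.digits 2 m).sum with hs
  -- r = s n
  have hrn : r = s n := by
    rw [hr, list_count_one_eq_sum _ (fun x hx => Nat.digits_lt_base (by norm_num) hx)]
  -- sum of digit sums
  have hS1 : ∀ i, 1 ≤ s (l i) := fun i => sum_digits_pos (hpos i)
  have hSle : ∀ i, s (l i) ≤ l i := fun i => Nat.digit_sum_le 2 (l i)
  have hk' : k ≤ ∑ i, s (l i) := by
    calc k = ∑ _i : Fin k, 1 := by simp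
    _ ≤ ∑ i, s (l i) := Finset.sum_le_sum fun i _ => hS1 i
  have hSn : ∑ i, s (l i) ≤ n := by
    rw [← hsum]; exact Finset.sum_le_sum fun i _ => hSle i
  -- valuation equation
  have hspec := Nat.multinomial_spec Finset.univ l
  rw [hsum] at hspec
  have hfac : ∀ i : Fin k, Nat.factorial (l i) ≠ 0 := fun i => (Nat.factorial_pos _).ne'
  have hmul : padicValNat 2 ((∏ i, Nat.factorial (l i)) * Nat.multinomial Finset.univ l)
      = padicValNat 2 (∏ i, Nat.factorial (l i)) + padicValNat 2 (Nat.multinomial Finset.univ l) :=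
    padicValNat.mul (Finset.prod_ne_zero_iff.mpr fun i _ => hfac i)
      (Nat.multinomial_pos _ _).ne'
  have hprod : padicValNat 2 (∏ i, Nat.factorial (l i)) = ∑ i, padicValNat 2 (Nat.factorial (l i)) := by
    rw [← Nat.factorization_def _ Nat.prime_two,
      Nat.factorization_prod (fun i _ => hfac i), Finset.sum_apply']
    exact Finset.sum_congr rfl fun i _ => Nat.factorization_def _ Nat.prime_two
  have hvals : ∑ i, padicValNat 2 (Nat.factorial (l i)) = n - ∑ i, s (l i) := by
    rw [show (∑ i, padicValNat 2 (Nat.factorial (l i))) = ∑ i, (l i - s (l i)) from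
      Finset.sum_congr rfl fun i _ => val_factorial (l i)]
    rw [Finset.sum_tsub_distrib Finset.univ (fun i _ => hSle i), hsum]
  have hvn : padicValNat 2 (Nat.factorial n) = n - s n := val_factorial n
  rw [hspec] at hmul
  rw [hprod, hvals, hvn] at hmul
  have hvpos : 1 ≤ padicValNat 2 (Nat.multinomial Finset.univ l) := by
    have hsn : s n ≤ n := Nat.digit_sum_le 2 n
    omega
  have := pow_padicValNat_dvd (p := 2) (n := Nat.multinomial Finset.univ l)
  exact dvd_trans (dvd_pow_self 2 (by omega : padicValNat 2 (Nat.multinomial Finset.univ l) ≠ 0)) this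
end
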